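/- Let (R,m) be a reduced Noetherian local ring of dimension d, A ⊆ R a subring, and suppose R is not simple as a D_{R|A}-module. Then lim sup_n (d!/n^d)·length_R(R/m⟨n⟩_A) = 0; that is, the differential signature of R vanishes. -/

import Mathlib

/-- The `A`-linear differential operators on `R` of order at most `n`,
defined inductively: `D^0` consists of the `R`-linear endomorphisms (multiplications),
and `δ ∈ D^{n+1}` iff `[δ, r] ∈ D^n` for all `r : R`. -/
def DiffOp (A R : Type*) [CommRing A] [CommRing R] [Algebra A R] : ℕ → Set (R →ₗ[A] R)
  | 0 => {δ | ∃ s : R, ∀ x : R, δ x = s * x}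
  | n + 1 => {δ | ∀ r : R,
      δ ∘ₗ LinearMap.mulLeft A r - LinearMap.mulLeft A r ∘ₗ δ ∈ DiffOp A R n}

/-- The `n`-th `A`-linear differential power of an ideal `I ⊆ R`:
`I⟨n⟩_A = {f ∈ R | δ f ∈ I for all δ ∈ D^{n-1}_{R|A}}`. -/
def diffPower (A : Type*) {R : Type*} [CommRing A] [CommRing R] [Algebra A R]
    (I : Ideal R) (n : ℕ) : Set R :=
  {f : R | ∀ δ ∈ DiffOp A R (n - 1), δ f ∈ I}
open IsLocalRing Filter

/-- The length of an `R`-module `M`: the supremum of lengths of strictly increasing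
chains of submodules of `M` (the Krull dimension of the lattice of submodules),
as an extended nonnegative real. -/
noncomputable def moduleLength (R M : Type*) [CommRing R] [AddCommGroup M]
    [Module R M] : ENNReal :=
  ((Order.krullDim (Submodule R M)).unbotD 0).toENNReal


section AuxLength
open Order

section Length

variable (R : Type*) [CommRing R]

/-- Length of a module as `ℕ∞`. -/
noncomputable def mlen (M : Type*) [AddCommGroup M] [Module R M] : ℕ∞ :=
  Order.height (⊤ : Submodule R M)

variable {R}

lemma moduleLength_eq_mlen (M : Type*) [AddCommGroup M] [Module R M] :
    moduleLength R M = (mlen R M).toENNReal := by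
  unfold moduleLength
  have h1 : Order.krullDim (Submodule R M) = ((mlen R M : ℕ∞) : WithBot ℕ∞) := by
    rw [Order.krullDim_eq_iSup_height_of_nonempty]
    congr 1
    refine le_antisymm (iSup_le fun a => Order.height_mono le_top) (le_iSup _ ⊤)
  rw [h1, WithBot.unbotD_coe]

lemma height_add_one_le {α : Type*} [Preorder α] {a b : α} (h : a < b) :
    Order.height a + 1 ≤ Order.height b := by
  rw [Order.height_eq_iSup_lt_height b]
  exact le_iSup₂ (f := fun y (_ : y < b) => Order.height y + 1) a h

variable {M : Type*} [AddCommGroup M] [Module R M]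

lemma mlen_le_of_surjective {M' : Type*} [AddCommGroup M'] [Module R M']
    (σ : M →ₗ[R] M') (hσ : Function.Surjective σ) : mlen R M' ≤ mlen R M := by
  have hsm : StrictMono (Submodule.comap σ) := by
    intro P Q hPQ
    refine lt_of_le_of_ne (Submodule.comap_mono hPQ.le) fun he => hPQ.ne ?_
    rw [← Submodule.map_comap_eq_of_surjective hσ P, ← Submodule.map_comap_eq_of_surjective hσ Q,
      he]
  have := Order.height_le_height_apply_of_strictMono _ hsm (⊤ : Submodule R M')
  rw [Submodule.comap_top] at this
  exact this

lemma mlen_equiv {M' : Type*} [AddCommGroup M'] [Module R M']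
    (e : M ≃ₗ[R] M') : mlen R M = mlen R M' :=
  le_antisymm (mlen_le_of_surjective e.symm.toLinearMap e.symm.surjective)
    (mlen_le_of_surjective e.toLinearMap e.surjective)

lemma mlen_subadd (N : Submodule R M) :
    mlen R M ≤ mlen R N + mlen R (M ⧸ N) := by
  have key : ∀ n : ℕ, ∀ p : LTSeries (Submodule R M), p.length = n →
      (p.length : ℕ∞) ≤ Order.height (p.last.comap N.subtype)
        + Order.height (p.last.map N.mkQ) := by
    intro n
    induction n with
    | zero => intro p hp; rw [hp]; simp
    | succ n ih =>
      intro p hp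
      have hne : p.length ≠ 0 := by omega
      have hlt : p.eraseLast.last < p.last := p.eraseLast_last_rel_last hne
      have hlen : p.eraseLast.length = n := by simp [RelSeries.eraseLast, hp]
      have IH := ih p.eraseLast hlen
      -- either the comap or the map increases strictly
      have hstep : p.eraseLast.last.comap N.subtype < p.last.comap N.subtype ∨
          p.eraseLast.last.map N.mkQ < p.last.map N.mkQ := by
        by_contra hcon
        push_neg at hcon
        obtain ⟨h1, h2⟩ := hcon
        have h1' : p.eraseLast.last.comap N.subtype = p.last.comap N.subtype :=
          ((Submodule.comap_mono hlt.le).lt_or_eq).resolve_left h1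
        have h2' : p.eraseLast.last.map N.mkQ = p.last.map N.mkQ :=
          ((Submodule.map_mono hlt.le).lt_or_eq).resolve_left h2
        -- deduce equality via modularity
        have hinf : p.last ⊓ N ≤ p.eraseLast.last ⊓ N := by
          have := congrArg (Submodule.map N.subtype) h1'
          rw [Submodule.map_comap_subtype, Submodule.map_comap_subtype] at this
          rw [inf_comm (a := p.last), inf_comm (a := p.eraseLast.last)]
          exact this.ge
        have hsup : p.last ⊔ N ≤ p.eraseLast.last ⊔ N := by
          have := congrArg (Submodule.comap N.mkQ) h2'
          rw [Submodule.comap_map_mkQ, Submodule.comap_map_mkQ] at this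
          rw [sup_comm (a := p.last), sup_comm (a := p.eraseLast.last)]
          exact this.ge
        exact hlt.ne (eq_of_le_of_inf_le_of_sup_le hlt.le hinf hsup)
      have hone : (p.length : ℕ∞) = (p.eraseLast.length : ℕ∞) + 1 := by
        rw [hlen, hp]; push_cast; ring
      rw [hone]
      rcases hstep with h | h
      · calc (p.eraseLast.length : ℕ∞) + 1
            ≤ (Order.height (p.eraseLast.last.comap N.subtype)
              + Order.height (p.eraseLast.last.map N.mkQ)) + 1 := by
              exact add_le_add_left IH 1
          _ = (Order.height (p.eraseLast.last.comap N.subtype) + 1)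
              + Order.height (p.eraseLast.last.map N.mkQ) := by ring
          _ ≤ Order.height (p.last.comap N.subtype) + Order.height (p.last.map N.mkQ) :=
              add_le_add (_root_.height_add_one_le h) (Order.height_mono (Submodule.map_mono hlt.le))
      · calc (p.eraseLast.length : ℕ∞) + 1
            ≤ (Order.height (p.eraseLast.last.comap N.subtype)
              + Order.height (p.eraseLast.last.map N.mkQ)) + 1 := by
              exact add_le_add_left IH 1
          _ = Order.height (p.eraseLast.last.comap N.subtype)
              + (Order.height (p.eraseLast.last.map N.mkQ) + 1) := by ring
          _ ≤ Order.height (p.last.comap N.subtype) + Order.height (p.last.map N.mkQ) :=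
              add_le_add (Order.height_mono (Submodule.comap_mono hlt.le)) (_root_.height_add_one_le h)
  refine Order.height_le fun p hp => ?_
  have := key p.length p rfl
  rw [hp, Submodule.comap_top (f := N.subtype)] at this
  rw [Submodule.map_top, Submodule.range_mkQ] at this
  exact this

end Length

section B
variable {R : Type*} [CommRing R]

variable {M : Type*} [AddCommGroup M] [Module R M]

lemma mlen_eq_zero_of_bot_eq_top (h : (⊥ : Submodule R M) = ⊤) : mlen R M = 0 := by
  rw [mlen, Order.height_eq_zero]
  intro P _
  rw [← h]
  exact bot_le

lemma mlen_le_one_of_simple (h : ∀ P : Submodule R M, P = ⊥ ∨ P = ⊤) : mlen R M ≤ 1 := by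
  rw [mlen, show (1 : ℕ∞) = ((1 : ℕ) : ℕ∞) from rfl, Order.height_le_coe_iff]
  intro P hP
  rcases h P with rfl | rfl
  · simpa using zero_lt_one
  · exact absurd hP (lt_irrefl _)

variable [IsLocalRing R]

lemma simple_of_cyclic_kill (x : M) (hx : ∀ y : M, ∃ r : R, r • x = y)
    (hk : ∀ r ∈ maximalIdeal R, ∀ y : M, r • y = 0) :
    ∀ P : Submodule R M, P = ⊥ ∨ P = ⊤ := by
  intro P
  by_cases hP : P = ⊥
  · exact Or.inl hP
  right
  obtain ⟨y, hyP, hy0⟩ := Submodule.exists_mem_ne_zero_of_ne_bot hP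
  obtain ⟨r, rfl⟩ := hx y
  have hr : IsUnit r := by
    by_contra hr
    exact hy0 (hk r ((IsLocalRing.mem_maximalIdeal r).mpr hr) x)
  obtain ⟨u, rfl⟩ := hr
  have hxP : x ∈ P := by
    have : (u⁻¹ : Rˣ) • ((u : R) • x) ∈ P := Submodule.smul_mem P _ hyP
    rwa [← smul_assoc, Units.smul_def, smul_eq_mul, Units.inv_mul, one_smul] at this
  rw [Submodule.eq_top_iff']
  intro z
  obtain ⟨r, rfl⟩ := hx z
  exact Submodule.smul_mem P r hxP

lemma mlen_le_card_of_kill :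
    ∀ (k : ℕ) (M : Type*) [AddCommGroup M] [Module R M],
      (∀ r ∈ maximalIdeal R, ∀ y : M, r • y = 0) →
      ∀ s : Finset M, s.card ≤ k → Submodule.span R (s : Set M) = ⊤ →
      mlen R M ≤ k := by
  intro k
  induction k with
  | zero =>
    intro M _ _ hk s hcard hspan
    rw [Nat.le_zero, Finset.card_eq_zero] at hcard
    subst hcard
    simp only [Finset.coe_empty, Submodule.span_empty] at hspan
    rw [mlen_eq_zero_of_bot_eq_top hspan]
    exact le_refl _
  | succ k ih =>
    intro M _ _ hk s hcard hspan
    classical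
    by_cases hsk : s.card ≤ k
    · exact (ih M hk s hsk hspan).trans (by exact_mod_cast Nat.cast_le.mpr (Nat.le_succ k))
    have hpos : 0 < s.card := by omega
    obtain ⟨x, hxs⟩ := Finset.card_pos.mp hpos
    set t := s.erase x with ht
    have htcard : t.card ≤ k := by
      rw [ht, Finset.card_erase_of_mem hxs]; omega
    set Q : Submodule R M := Submodule.span R {x} with hQ
    -- length of Q
    have hQ1 : mlen R Q ≤ 1 := by
      refine mlen_le_one_of_simple (simple_of_cyclic_kill
        (⟨x, Submodule.mem_span_singleton_self x⟩ : Q) ?_ ?_)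
      · rintro ⟨y, hy⟩
        obtain ⟨r, hr⟩ := Submodule.mem_span_singleton.mp hy
        exact ⟨r, Subtype.ext hr⟩
      · intro r hr y
        ext
        exact hk r hr y.1
    -- length of M ⧸ Q
    have hquot : mlen R (M ⧸ Q) ≤ k := by
      classical
      refine ih (M ⧸ Q) ?_ (t.image Q.mkQ) ((Finset.card_image_le).trans htcard) ?_
      · intro r hr y
        obtain ⟨z, rfl⟩ := Submodule.Quotient.mk_surjective Q y
        rw [← Submodule.Quotient.mk_smul, hk r hr z, Submodule.Quotient.mk_zero]
      · rw [Finset.coe_image, Submodule.span_image]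
        have hs' : s = insert x t := (Finset.insert_erase hxs).symm
        have : (⊤ : Submodule R (M ⧸ Q)) = Submodule.map Q.mkQ (Submodule.span R (s : Set M)) := by
          rw [hspan, Submodule.map_top, Submodule.range_mkQ]
        rw [this, hs', Finset.coe_insert, Submodule.span_insert]
        rw [Submodule.map_sup]
        have hker : Submodule.map Q.mkQ (Submodule.span R {x}) = ⊥ := by
          rw [← hQ]; exact Submodule.mkQ_map_self Q
        rw [hker, bot_sup_eq]
    calc mlen R M ≤ mlen R Q + mlen R (M ⧸ Q) := mlen_subadd Q
      _ ≤ 1 + (k : ℕ∞) := add_le_add hQ1 hquot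
      _ = ((k + 1 : ℕ) : ℕ∞) := by push_cast; ring

-- quotient helpers
lemma mlen_quot_mono {a b : Ideal R} (h : a ≤ b) :
    mlen R (R ⧸ b) ≤ mlen R (R ⧸ a) := by
  refine mlen_le_of_surjective (Submodule.mapQ a b LinearMap.id h) ?_
  intro z
  obtain ⟨r, rfl⟩ := Submodule.Quotient.mk_surjective b z
  exact ⟨Submodule.Quotient.mk r, by rw [Submodule.mapQ_apply]; rfl⟩

lemma mlen_step (a b : Ideal R) (h : a ≤ b) :
    mlen R (R ⧸ a) ≤ mlen R (Submodule.map a.mkQ (b : Submodule R R)) + mlen R (R ⧸ b) := by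
  have := mlen_subadd (R := R) (M := R ⧸ a) (Submodule.map a.mkQ b)
  rwa [mlen_equiv (Submodule.quotientQuotientEquivQuotient a b h)] at this

lemma mlen_span_singleton_le (x : M) (I : Ideal R) (hI : ∀ r ∈ I, r • x = 0) :
    mlen R (Submodule.span R {x} : Submodule R M) ≤ mlen R (R ⧸ I) := by
  set σ : R ⧸ I →ₗ[R] M := Submodule.liftQ I (LinearMap.toSpanSingleton R M x)
    (fun r hr => by simpa using hI r hr) with hσ
  have hrange : LinearMap.range σ = Submodule.span R {x} := by
    rw [hσ, Submodule.range_liftQ]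
    exact (LinearMap.span_singleton_eq_range R M x).symm
  calc mlen R (Submodule.span R {x} : Submodule R M)
      = mlen R (LinearMap.range σ) := by rw [hrange]
    _ ≤ mlen R (R ⧸ I) := mlen_le_of_surjective σ.rangeRestrict
        (LinearMap.surjective_rangeRestrict σ)

end B

section C
variable {A R : Type*} [CommRing A] [CommRing R] [Algebra A R]

lemma diffop_pow_mul_eq_zero : ∀ (n : ℕ) (δ : R →ₗ[A] R), δ ∈ DiffOp A R n →
    ∀ s x : R, s * x = 0 → s ^ (n + 1) * δ x = 0 := by
  intro n
  induction n with
  | zero =>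
    rintro δ ⟨c, hc⟩ s x hsx
    rw [hc x, pow_one, mul_left_comm, hsx, mul_zero]
  | succ n ih =>
    intro δ hδ s x hsx
    have hδ' := hδ s
    have H := ih _ hδ' s x hsx
    have hδx : (δ ∘ₗ LinearMap.mulLeft A s - LinearMap.mulLeft A s ∘ₗ δ) x = -(s * δ x) := by
      simp only [LinearMap.sub_apply, LinearMap.comp_apply, LinearMap.mulLeft_apply]
      rw [hsx, map_zero, zero_sub]
    rw [hδx, mul_neg, neg_eq_zero] at H
    calc s ^ (n + 1 + 1) * δ x = s ^ (n + 1) * (s * δ x) := by ring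
      _ = 0 := H

lemma diffop_mem_of_mem_pow (I : Ideal R) :
    ∀ (n : ℕ), ∀ f ∈ I ^ n, ∀ k < n, ∀ δ ∈ DiffOp A R k, δ f ∈ I := by
  intro n
  induction n with
  | zero => intro f _ k hk; omega
  | succ n ih =>
    intro f hf k hk δ hδ
    rw [pow_succ] at hf
    induction hf using Submodule.mul_induction_on' with
    | mem_mul_mem a ha b hb =>
      match k, hδ with
      | 0, ⟨c, hc⟩ =>
        rw [hc]
        exact I.mul_mem_left c (I.mul_mem_left a hb)
      | (j+1), hδ =>
        have hcomm := hδ b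
        have h1 : (δ ∘ₗ LinearMap.mulLeft A b - LinearMap.mulLeft A b ∘ₗ δ) a ∈ I := by
          refine ih a ha j (by omega) _ hcomm
        have h2 : δ (a * b) = (δ ∘ₗ LinearMap.mulLeft A b - LinearMap.mulLeft A b ∘ₗ δ) a
            + b * δ a := by
          simp only [LinearMap.sub_apply, LinearMap.comp_apply, LinearMap.mulLeft_apply]
          rw [mul_comm a b]
          ring
        rw [h2]
        exact I.add_mem h1 (Ideal.mul_mem_right _ _ hb)
    | add x hx y hy ihx ihy =>
      rw [map_add]
      exact I.add_mem ihx ihy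

lemma exists_ann_of_mem_minimalPrimes [IsReduced R] {q : Ideal R} (hq : q ∈ minimalPrimes R)
    {x : R} (hx : x ∈ q) : ∃ s : R, s ∉ q ∧ s * x = 0 := by
  haveI hqp : q.IsPrime := hq.1.1
  set S := Localization q.primeCompl
  have hmem : algebraMap R S x ∈ maximalIdeal S :=
    (IsLocalization.AtPrime.to_map_mem_maximal_iff S q x).mpr hx
  have hnil : IsNilpotent (algebraMap R S x) :=
    by haveI : Ring.KrullDimLE 0 S := .of_isLocalization _ hq _
       exact Ring.KrullDimLE.isNilpotent_iff_mem_maximalIdeal.mpr hmem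
  obtain ⟨k, hk⟩ := hnil
  have hk1 : algebraMap R S (x ^ (k + 1)) = 0 := by
    rw [map_pow, pow_succ, hk, zero_mul]
  obtain ⟨⟨s, hs⟩, hsx⟩ := (IsLocalization.map_eq_zero_iff q.primeCompl S (x ^ (k+1))).mp hk1
  refine ⟨s, hs, ?_⟩
  have : (s * x) ^ (k + 1) = 0 := by
    have : s ^ (k+1) * x ^ (k+1) = s ^ k * (s * x ^ (k+1)) := by ring
    rw [mul_pow, this, hsx, mul_zero]
  exact (IsReduced.eq_zero _ ⟨k+1, this⟩ : s * x = 0)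

lemma minimalPrime_diffop_stable [IsReduced R] {q : Ideal R} (hq : q ∈ minimalPrimes R) :
    ∀ n, ∀ δ ∈ DiffOp A R n, ∀ x ∈ q, δ x ∈ q := by
  intro n δ hδ x hx
  haveI hqp : q.IsPrime := hq.1.1
  obtain ⟨s, hs, hsx⟩ := exists_ann_of_mem_minimalPrimes hq hx
  have h0 : s ^ (n + 1) * δ x ∈ q := by
    rw [diffop_pow_mul_eq_zero n δ hδ s x hsx]; exact q.zero_mem
  rcases hqp.mem_or_mem h0 with h | h
  · exact absurd (hqp.mem_of_pow_mem _ h) hs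
  · exact h

end C

section D

variable {R : Type*} [CommRing R] [IsLocalRing R] [IsNoetherianRing R]

lemma mlen_quot_top : mlen R (R ⧸ (⊤ : Ideal R)) = 0 := by
  apply mlen_eq_zero_of_bot_eq_top
  ext y
  simp only [Submodule.mem_bot, Submodule.mem_top, iff_true]
  obtain ⟨r, rfl⟩ := Submodule.Quotient.mk_surjective _ y
  exact (Submodule.Quotient.mk_eq_zero _).mpr trivial

lemma mlen_quot_ne_top_of_pow_le :
    ∀ (N : ℕ) (c : Ideal R), (maximalIdeal R) ^ N ≤ c → mlen R (R ⧸ c) ≠ ⊤ := by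
  intro N
  induction N with
  | zero =>
    intro c hc
    rw [pow_zero, Ideal.one_eq_top, top_le_iff] at hc
    subst hc
    simp [mlen_quot_top]
  | succ N ih =>
    intro c hc
    set b := c ⊔ (maximalIdeal R) ^ N with hb
    have hstep := mlen_step c b le_sup_left
    have hbne : mlen R (R ⧸ b) ≠ ⊤ := ih b le_sup_right
    set K := Submodule.map c.mkQ (b : Submodule R R) with hK
    have hkill : ∀ r ∈ maximalIdeal R, ∀ y : K, r • y = 0 := by
      rintro r hr ⟨yv, hyK⟩
      obtain ⟨z, hzb, hz⟩ := Submodule.mem_map.mp hyK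
      apply Subtype.ext
      show r • yv = 0
      rw [← hz, Submodule.mkQ_apply, ← Submodule.Quotient.mk_smul, Submodule.Quotient.mk_eq_zero]
      obtain ⟨u, hu, v, hv, rfl⟩ := Submodule.mem_sup.mp hzb
      have h1 : r • (u + v) = r * u + r * v := by rw [smul_eq_mul]; ring
      rw [h1]
      refine c.add_mem (c.mul_mem_left r hu) (hc ?_)
      rw [pow_succ']
      exact Ideal.mul_mem_mul hr hv
    have hKfg : K.FG := (IsNoetherian.noetherian (b : Submodule R R)).map _
    haveI : Module.Finite R K := Module.Finite.iff_fg.mpr hKfg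
    obtain ⟨s, hs⟩ := Module.Finite.fg_top (R := R) (M := K)
    have hKlen : mlen R K ≤ s.card := mlen_le_card_of_kill s.card K hkill s le_rfl hs
    have hfin : mlen R K + mlen R (R ⧸ b) < ⊤ :=
      WithTop.add_lt_top.mpr ⟨lt_of_le_of_lt hKlen (WithTop.coe_lt_top _),
        lt_top_iff_ne_top.mpr hbne⟩
    exact (lt_of_le_of_lt hstep hfin).ne

lemma exists_pow_le_of_unique_prime (c : Ideal R) (hc : c ≠ ⊤)
    (h : ∀ p : Ideal R, p.IsPrime → c ≤ p → p = maximalIdeal R) :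
    ∃ N, (maximalIdeal R) ^ N ≤ c := by
  have hrad : c.radical = maximalIdeal R := by
    rw [Ideal.radical_eq_sInf]
    refine le_antisymm (sInf_le ⟨le_maximalIdeal hc, (maximalIdeal.isMaximal R).isPrime⟩) ?_
    refine le_sInf ?_
    rintro p ⟨hcp, hp⟩
    rw [h p hp hcp]
  obtain ⟨N, hN⟩ := Ideal.exists_radical_pow_le_of_fg c (IsNoetherian.noetherian _)
  exact ⟨N, by rwa [hrad] at hN⟩

lemma mlen_bound_of_unique_prime (c : Ideal R) (hc : c ≠ ⊤)
    (h : ∀ p : Ideal R, p.IsPrime → c ≤ p → p = maximalIdeal R) (e : ℕ) :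
    ∃ C : ℕ∞, C ≠ ⊤ ∧ ∀ n : ℕ,
      mlen R (R ⧸ (c ⊔ (maximalIdeal R) ^ n)) ≤ C * (n : ℕ∞) ^ e + C := by
  obtain ⟨N, hN⟩ := exists_pow_le_of_unique_prime c hc h
  refine ⟨mlen R (R ⧸ c), mlen_quot_ne_top_of_pow_le N c hN, fun n => ?_⟩
  calc mlen R (R ⧸ (c ⊔ (maximalIdeal R) ^ n)) ≤ mlen R (R ⧸ c) := mlen_quot_mono le_sup_left
    _ ≤ mlen R (R ⧸ c) * (n : ℕ∞) ^ e + mlen R (R ⧸ c) := le_add_self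

-- the numerical inequality for the telescoping step
lemma nat_telescope_ineq (C e n : ℕ) :
    (2*C+2) * n^(e+1) + (2*C+2) + (C * (n+1)^e + C) ≤ (2*C+2) * (n+1)^(e+1) + (2*C+2) := by
  have h1 : n ^ (e+1) ≤ (n+1)^e * n := by
    rw [pow_succ]
    exact Nat.mul_le_mul_right n (Nat.pow_le_pow_left (Nat.le_succ n) e)
  have h2 : 1 ≤ (n+1)^e := Nat.one_le_pow _ _ (Nat.succ_pos n)
  have h3 : (n+1)^(e+1) = (n+1)^e * n + (n+1)^e := by rw [pow_succ]; ring
  nlinarith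

lemma key_induction :
    ∀ (e : ℕ) (c : Ideal R), c ≠ ⊤ →
    (∀ l : LTSeries (PrimeSpectrum R), c ≤ l.head.asIdeal → l.length ≤ e) →
    ∃ C : ℕ∞, C ≠ ⊤ ∧ ∀ n : ℕ,
      mlen R (R ⧸ (c ⊔ (maximalIdeal R) ^ n)) ≤ C * (n : ℕ∞) ^ e + C := by
  intro e
  induction e with
  | zero =>
    intro c hc hdim
    refine mlen_bound_of_unique_prime c hc ?_ 0
    intro p hp hcp
    by_contra hne
    have hpm : p < maximalIdeal R := lt_of_le_of_ne (le_maximalIdeal hp.ne_top) hne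
    set l : LTSeries (PrimeSpectrum R) :=
      (RelSeries.singleton _ ⟨maximalIdeal R, (maximalIdeal.isMaximal R).isPrime⟩).cons
        ⟨p, hp⟩ (by rw [RelSeries.head_singleton]; exact hpm) with hl
    have := hdim l (by simpa [hl] using hcp)
    simp [hl] at this
  | succ e ih =>
    intro c hc hdim
    by_cases hm : maximalIdeal R ∈ c.minimalPrimes
    · refine mlen_bound_of_unique_prime c hc ?_ (e+1)
      intro p hp hcp
      exact le_antisymm (le_maximalIdeal hp.ne_top) (hm.2 ⟨hp, hcp⟩ (le_maximalIdeal hp.ne_top))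
    -- choose x avoiding all minimal primes of c
    have hfin : c.minimalPrimes.Finite := by
      rw [Ideal.minimalPrimes_eq_comap]
      exact (minimalPrimes.finite_of_isNoetherianRing (R ⧸ c)).image _
    have havoid : ∃ x ∈ maximalIdeal R, ∀ p ∈ c.minimalPrimes, x ∉ p := by
      classical
      have hnotle : ¬ ∃ p ∈ hfin.toFinset, maximalIdeal R ≤ id p := by
        rintro ⟨p, hp, hle⟩
        rw [Set.Finite.mem_toFinset] at hp
        have hpm : p = maximalIdeal R :=
          le_antisymm (le_maximalIdeal hp.1.1.ne_top) hle
        exact hm (hpm ▸ hp)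
      have hsub := (Ideal.subset_union_prime (R := R) (s := hfin.toFinset) (f := id) ⊥ ⊥
        (fun i hi _ _ => (hfin.mem_toFinset.mp hi).1.1)).not.mpr hnotle
      obtain ⟨x, hxm, hxp⟩ := Set.not_subset.mp hsub
      refine ⟨x, hxm, fun p hp hxin => hxp ?_⟩
      exact Set.mem_biUnion (hfin.mem_toFinset.mpr hp) hxin
    obtain ⟨x, hxm, hxp⟩ := havoid
    set c' : Ideal R := c ⊔ Ideal.span {x} with hc'
    have hc'le : c' ≤ maximalIdeal R := by
      rw [hc']
      exact sup_le (le_maximalIdeal hc) ((Ideal.span_singleton_le_iff_mem _).mpr hxm)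
    have hc'ne : c' ≠ ⊤ := fun h => (maximalIdeal.isMaximal R).ne_top (top_le_iff.mp (h ▸ hc'le))
    have hdim' : ∀ l : LTSeries (PrimeSpectrum R), c' ≤ l.head.asIdeal → l.length ≤ e := by
      intro l hl
      have hcl : c ≤ l.head.asIdeal := le_trans (le_sup_left.trans le_rfl) (hc' ▸ hl)
      have hxl : x ∈ l.head.asIdeal :=
        (Ideal.span_singleton_le_iff_mem _).mp (le_trans le_sup_right (hc' ▸ hl))
      obtain ⟨p, hpmin, hple⟩ := Ideal.exists_minimalPrimes_le (I := c) hcl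
      haveI hpp : p.IsPrime := hpmin.1.1
      have hplt : (⟨p, hpp⟩ : PrimeSpectrum R) < l.head := by
        refine lt_of_le_of_ne hple fun heq => ?_
        exact hxp p hpmin (by rw [show p = l.head.asIdeal from congrArg PrimeSpectrum.asIdeal heq]; exact hxl)
      have := hdim (l.cons ⟨p, hpp⟩ hplt) (by simpa using hpmin.1.2)
      simpa using this
    obtain ⟨C, hCne, hCb⟩ := ih c' hc'ne hdim'
    lift C to ℕ using hCne
    refine ⟨((2*C+2 : ℕ) : ℕ∞), WithTop.coe_ne_top, ?_⟩
    intro n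
    induction n with
    | zero =>
      rw [pow_zero, Ideal.one_eq_top, sup_top_eq, mlen_quot_top]
      exact zero_le
    | succ k ihk =>
      set a : Ideal R := c ⊔ (maximalIdeal R) ^ (k+1) with ha
      set b : Ideal R := c' ⊔ (maximalIdeal R) ^ (k+1) with hb
      have hab : a ≤ b := sup_le_sup_right le_sup_left _
      have hstep := mlen_step a b hab
      -- the middle term
      have hmap : Submodule.map a.mkQ (b : Submodule R R) = Submodule.span R {a.mkQ x} := by
        have hba : b = a ⊔ Ideal.span {x} := by
          rw [hb, ha, hc', sup_right_comm]
        rw [hba, Submodule.map_sup, Submodule.mkQ_map_self, bot_sup_eq]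
        rw [show ((Ideal.span {x} : Ideal R) : Submodule R R) = Submodule.span R {x} from rfl,
          Submodule.map_span, Set.image_singleton]
      have hmid : mlen R (Submodule.map a.mkQ (b : Submodule R R)) ≤
          mlen R (R ⧸ (c ⊔ (maximalIdeal R) ^ k)) := by
        rw [hmap]
        refine mlen_span_singleton_le (a.mkQ x) (c ⊔ (maximalIdeal R)^k) ?_
        intro r hr
        rw [Submodule.mkQ_apply, ← Submodule.Quotient.mk_smul, Submodule.Quotient.mk_eq_zero]
        obtain ⟨u, hu, v, hv, rfl⟩ := Submodule.mem_sup.mp hr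
        have h1 : (u + v) • x = u * x + v * x := by rw [smul_eq_mul]; ring
        rw [h1]
        refine Submodule.add_mem _ ?_ ?_
        · exact le_sup_left (α := Ideal R) (Ideal.mul_mem_right x c hu)
        · refine le_sup_right (α := Ideal R) ?_
          rw [pow_succ]
          exact Ideal.mul_mem_mul hv hxm
      have hbb : mlen R (R ⧸ b) ≤ (C : ℕ∞) * ((k+1 : ℕ) : ℕ∞) ^ e + C := by
        have := hCb (k+1)
        rwa [← hb] at this
      -- combine
      have hcomb : mlen R (R ⧸ a) ≤ mlen R (R ⧸ (c ⊔ (maximalIdeal R) ^ k))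
          + ((C : ℕ∞) * ((k+1 : ℕ) : ℕ∞) ^ e + C) :=
        le_trans hstep (add_le_add hmid hbb)
      have harith : (((2*C+2 : ℕ) : ℕ∞) * (k : ℕ∞) ^ (e+1) + ((2*C+2 : ℕ) : ℕ∞))
          + ((C : ℕ∞) * ((k+1 : ℕ) : ℕ∞) ^ e + C)
          ≤ ((2*C+2 : ℕ) : ℕ∞) * ((k+1 : ℕ) : ℕ∞) ^ (e+1) + ((2*C+2 : ℕ) : ℕ∞) := by
        have := nat_telescope_ineq C e k
        have hcast := (Nat.cast_le (α := ℕ∞)).mpr this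
        push_cast at hcast ⊢
        convert hcast using 2 <;> push_cast <;> ring
      calc mlen R (R ⧸ (c ⊔ (maximalIdeal R) ^ (k+1)))
          ≤ mlen R (R ⧸ (c ⊔ (maximalIdeal R) ^ k)) + ((C : ℕ∞) * ((k+1 : ℕ) : ℕ∞) ^ e + C) := hcomb
        _ ≤ (((2*C+2 : ℕ) : ℕ∞) * (k : ℕ∞) ^ (e+1) + ((2*C+2 : ℕ) : ℕ∞))
            + ((C : ℕ∞) * ((k+1 : ℕ) : ℕ∞) ^ e + C) := add_le_add_left ihk _
        _ ≤ ((2*C+2 : ℕ) : ℕ∞) * ((k+1 : ℕ) : ℕ∞) ^ (e+1) + ((2*C+2 : ℕ) : ℕ∞) := harith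
        _ = ((2*C+2 : ℕ) : ℕ∞) * (((k+1 : ℕ) : ℕ∞)) ^ (e+1) + ((2*C+2 : ℕ) : ℕ∞) := by norm_cast

end D

end AuxLength

/-- If `(R, m)` is a reduced Noetherian local ring of dimension `d` which is not
simple as a `D_{R|A}`-module (it has a nonzero proper `D_{R|A}`-stable ideal), then
the differential signature vanishes:
`limsup_n d! · length(R / m⟨n⟩_A) / n^d = 0`.  Here `J n` denotes the differential
power `m⟨n⟩_A`, regarded as an ideal of `R`. -/
theorem diffSignature_eq_zero_of_not_simple (A R : Type*) [CommRing A] [CommRing R]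
    [Algebra A R] [IsLocalRing R] [IsNoetherianRing R] [IsReduced R]
    (d : ℕ) (hd : ringKrullDim R = d)
    (hns : ∃ I : Ideal R, I ≠ ⊥ ∧ I ≠ ⊤ ∧
      ∀ m : ℕ, ∀ δ ∈ DiffOp A R m, ∀ f ∈ I, δ f ∈ I)
    (J : ℕ → Ideal R)
    (hJ : ∀ n : ℕ, (J n : Set R) = diffPower A (maximalIdeal R) n) :
    Filter.limsup
      (fun n : ℕ =>
        (d.factorial : ENNReal) * moduleLength R (R ⧸ J n) / (n : ENNReal) ^ d)
      Filter.atTop = 0 := by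
  obtain ⟨I, hIbot, hItop, hIstab⟩ := hns
  have hkd : Order.krullDim (PrimeSpectrum R) = ((d : ℕ) : WithBot ℕ∞) := hd
  -- generic chain bound
  have hlen_le : ∀ l : LTSeries (PrimeSpectrum R), l.length ≤ d := by
    intro l
    have h1 : (l.length : WithBot ℕ∞) ≤ Order.krullDim (PrimeSpectrum R) :=
      Order.LTSeries.length_le_krullDim l
    rw [hkd] at h1
    exact_mod_cast h1
  -- d ≥ 1
  have hd1 : 1 ≤ d := by
    by_contra hd0
    have hdz : d = 0 := by omega
    subst hdz
    have hall : ∀ p : Ideal R, p.IsPrime → p = maximalIdeal R := by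
      intro p hp
      by_contra hne
      have hpm : p < maximalIdeal R := lt_of_le_of_ne (le_maximalIdeal hp.ne_top) hne
      have := hlen_le ((RelSeries.singleton _
        ⟨maximalIdeal R, (maximalIdeal.isMaximal R).isPrime⟩).cons ⟨p, hp⟩
        (by rw [RelSeries.head_singleton]; exact hpm))
      simp at this
    have hbot : maximalIdeal R = ⊥ := by
      have h1 : nilradical R = ⊥ := nilradical_eq_zero R
      have h2 : nilradical R = sInf {J : Ideal R | J.IsPrime} := nilradical_eq_sInf R
      have h3 : sInf {J : Ideal R | J.IsPrime} = maximalIdeal R := by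
        refine le_antisymm (sInf_le (maximalIdeal.isMaximal R).isPrime) ?_
        refine le_sInf fun p hp => ?_
        rw [hall p hp]
      rw [← h3, ← h2, h1]
    exact hIbot (le_bot_iff.mp (hbot ▸ le_maximalIdeal hItop))
  -- a minimal prime not containing I
  have hq : ∃ q ∈ minimalPrimes R, ¬ I ≤ q := by
    by_contra hcon
    push_neg at hcon
    have hle : I ≤ sInf (minimalPrimes R) := le_sInf hcon
    have : sInf (minimalPrimes R) = ⊥ := by
      calc sInf (minimalPrimes R) = (⊥ : Ideal R).radical :=
            Ideal.sInf_minimalPrimes (I := (⊥ : Ideal R))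
        _ = nilradical R := by rw [nilradical, Submodule.zero_eq_bot]
        _ = ⊥ := by rw [nilradical_eq_zero R, Submodule.zero_eq_bot]
    exact hIbot (le_bot_iff.mp (this ▸ hle))
  obtain ⟨q, hqmin, hqI⟩ := hq
  haveI hqp : q.IsPrime := hqmin.1.1
  set K₀ : Ideal R := I ⊔ q with hK₀
  have hK₀m : K₀ ≤ maximalIdeal R :=
    sup_le (le_maximalIdeal hItop) (le_maximalIdeal hqp.ne_top)
  have hK₀top : K₀ ≠ ⊤ := fun h =>
    (maximalIdeal.isMaximal R).ne_top (top_le_iff.mp (h ▸ hK₀m))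
  have hKstab : ∀ n : ℕ, ∀ δ ∈ DiffOp A R n, ∀ f ∈ K₀, δ f ∈ K₀ := by
    intro n δ hδ f hf
    obtain ⟨u, hu, v, hv, rfl⟩ := Submodule.mem_sup.mp hf
    rw [map_add]
    exact Submodule.add_mem _ (Submodule.mem_sup_left (hIstab n δ hδ u hu))
      (Submodule.mem_sup_right (minimalPrime_diffop_stable hqmin n δ hδ v hv))
  -- dimension bound for K₀
  have hdim : ∀ l : LTSeries (PrimeSpectrum R), K₀ ≤ l.head.asIdeal → l.length ≤ d - 1 := by
    intro l hl
    have hql : q ≤ l.head.asIdeal := le_trans le_sup_right hl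
    have hqlt : (⟨q, hqp⟩ : PrimeSpectrum R) < l.head := by
      refine lt_of_le_of_ne hql fun heq => ?_
      refine hqI ?_
      have : q = l.head.asIdeal := congrArg PrimeSpectrum.asIdeal heq
      rw [this]
      exact le_trans le_sup_left hl
    have := hlen_le (l.cons ⟨q, hqp⟩ hqlt)
    simp at this
    omega
  obtain ⟨C, hCne, hCb⟩ := key_induction (d - 1) K₀ hK₀top hdim
  -- containment in differential powers
  have hJsub : ∀ n : ℕ, 1 ≤ n → K₀ ⊔ (maximalIdeal R) ^ n ≤ J n := by
    intro n hn f hf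
    have : f ∈ (J n : Set R) := by
      rw [hJ n]
      intro δ hδ
      obtain ⟨g, hg, h, hh, rfl⟩ := Submodule.mem_sup.mp hf
      rw [map_add]
      refine Submodule.add_mem _ (hK₀m (hKstab (n-1) δ hδ g hg)) ?_
      exact diffop_mem_of_mem_pow (maximalIdeal R) n h hh (n-1) (by omega) δ hδ
    exact this
  -- length bound
  set C' : ENNReal := (C : ℕ∞).toENNReal with hC'
  have hC'ne : C' ≠ ⊤ := by
    rw [hC']
    intro h
    rw [← ENat.toENNReal_top] at h
    exact hCne (ENat.toENNReal_inj.mp h)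
  have hlb : ∀ n : ℕ, 1 ≤ n →
      moduleLength R (R ⧸ J n) ≤ C' * (n : ENNReal) ^ (d - 1) + C' := by
    intro n hn
    have h1 : mlen R (R ⧸ J n) ≤ C * (n : ℕ∞) ^ (d - 1) + C :=
      le_trans (mlen_quot_mono (hJsub n hn)) (hCb n)
    rw [moduleLength_eq_mlen]
    calc (mlen R (R ⧸ J n)).toENNReal ≤ (C * (n : ℕ∞) ^ (d - 1) + C).toENNReal := by
          exact_mod_cast ENat.toENNReal_le.mpr h1
      _ = C' * (n : ENNReal) ^ (d - 1) + C' := by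
          rw [ENat.toENNReal_add, ENat.toENNReal_mul, ENat.toENNReal_pow, ENat.toENNReal_coe]
  -- the comparison function
  set g : ℕ → ENNReal := fun n => (2 * (d.factorial : ENNReal) * C') / n with hg
  have hev : ∀ᶠ n in atTop, (fun n : ℕ =>
      (d.factorial : ENNReal) * moduleLength R (R ⧸ J n) / (n : ENNReal) ^ d) n ≤ g n := by
    rw [Filter.eventually_atTop]
    refine ⟨1, fun n hn => ?_⟩
    have hn0 : (n : ENNReal) ≠ 0 := Nat.cast_ne_zero.mpr (by omega)
    have hnt : (n : ENNReal) ≠ ⊤ := ENNReal.natCast_ne_top n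
    have hone : (1 : ENNReal) ≤ (n : ENNReal) ^ (d - 1) :=
      one_le_pow_of_one_le' (by exact_mod_cast hn) _
    have hnum : (d.factorial : ENNReal) * moduleLength R (R ⧸ J n)
        ≤ (2 * (d.factorial : ENNReal) * C') * (n : ENNReal) ^ (d - 1) := by
      calc (d.factorial : ENNReal) * moduleLength R (R ⧸ J n)
          ≤ (d.factorial : ENNReal) * (C' * (n : ENNReal) ^ (d - 1) + C') :=
            mul_le_mul_right (hlb n hn) _
        _ ≤ (d.factorial : ENNReal) * (C' * (n : ENNReal) ^ (d - 1)
              + C' * (n : ENNReal) ^ (d - 1)) := by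
            refine mul_le_mul_right (add_le_add_right ?_ _) _
            exact le_mul_of_one_le_right' hone
        _ = (2 * (d.factorial : ENNReal) * C') * (n : ENNReal) ^ (d - 1) := by ring
    have hdd : (n : ENNReal) ^ d = (n : ENNReal) * (n : ENNReal) ^ (d - 1) := by
      conv_lhs => rw [show d = (d - 1) + 1 by omega]
      rw [pow_succ']
    calc (d.factorial : ENNReal) * moduleLength R (R ⧸ J n) / (n : ENNReal) ^ d
        ≤ (2 * (d.factorial : ENNReal) * C') * (n : ENNReal) ^ (d - 1) / (n : ENNReal) ^ d :=
          ENNReal.div_le_div_right hnum _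
      _ = (2 * (d.factorial : ENNReal) * C') / (n : ENNReal) := by
          rw [hdd]
          exact ENNReal.mul_div_mul_right _ _ (pow_ne_zero _ hn0) (ENNReal.pow_ne_top hnt)
      _ = g n := rfl
  have hg0 : Filter.Tendsto g atTop (nhds 0) := by
    have hne : 2 * (d.factorial : ENNReal) * C' ≠ ⊤ :=
      ENNReal.mul_ne_top (ENNReal.mul_ne_top (by simp) (ENNReal.natCast_ne_top _)) hC'ne
    have h1 : Filter.Tendsto (fun n : ℕ => (2 * (d.factorial : ENNReal) * C') * (n : ENNReal)⁻¹)
        atTop (nhds 0) := by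
      have := ENNReal.Tendsto.const_mul (a := 2 * (d.factorial : ENNReal) * C')
        ENNReal.tendsto_inv_nat_nhds_zero (Or.inr hne)
      simpa using this
    refine h1.congr fun n => ?_
    simp [hg, div_eq_mul_inv]
  refine le_antisymm ?_ zero_le
  calc Filter.limsup _ atTop ≤ Filter.limsup g atTop := Filter.limsup_le_limsup hev
    _ = 0 := hg0.limsup_eq
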